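/- Let Φ : [0,∞) → ℝ^{m×q} be continuous with ‖Φ(t)‖ ≤ M for all t, and persistently exciting: there exist T > 0 and δ > 0 such that ∫_t^{t+T} Φ(τ)ᵀ Φ(τ) dτ ⪰ δ I_q (in the Loewner order) for all t ≥ 0. Let γ > 0 and let x : [0,∞) → ℝ^q be differentiable with x'(t) = −γ Φ(t)ᵀ Φ(t) x(t). Then there exist k ≥ 1 and λ > 0, depending only on γ, M, T, δ, such that ‖x(t)‖ ≤ k e^{−λ t} ‖x(0)‖ for all t ≥ 0. -/

import Mathlib

open Matrix
attribute [local instance] Matrix.normedAddCommGroup Matrix.normedSpace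

open MeasureTheory Set Real
open scoped InnerProduct

/-!
Along the flow `y' = -γ A(t)† A(t) y`, the energy `V = ‖y‖²` satisfies `V' = -2γ ‖A y‖²`.
Over a window `[t, t + T]` the state moves by at most `γ L ∫ ‖A y‖`, which Cauchy–Schwarz bounds
by the energy `∫ ‖A y‖²` dissipated in that window; persistent excitation applied to the frozen
vector `y t` then shows that this energy is at least a fixed fraction of `V t`. So `V` contracts by
a fixed factor `e^{-c}` over every window, and monotonicity of `V` turns this into exponential
decay. The argument works for any bounded operator family between Hilbert spaces; the matrix
statement is the case of `Φ(t)` acting on Euclidean spaces, whose norms are equivalent to the sup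
norms used in the statement.
-/

theorem sq_intervalIntegral_le_mul_intervalIntegral_sq {f : ℝ → ℝ} {a b : ℝ} (hab : a ≤ b)
    (hf : IntervalIntegrable f volume a b)
    (hf2 : IntervalIntegrable (fun x => f x ^ 2) volume a b) :
    (∫ x in a..b, f x) ^ 2 ≤ (b - a) * ∫ x in a..b, f x ^ 2 := by
  rcases hab.eq_or_lt with rfl | hlt
  · simp
  set J := ∫ x in a..b, f x
  set I := ∫ x in a..b, f x ^ 2
  have hquad : ∀ c : ℝ, 2 * c * J ≤ I + c ^ 2 * (b - a) := fun c => by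
    have h := intervalIntegral.integral_mono_on hab (hf.const_mul (2 * c))
      (hf2.add (intervalIntegrable_const (c := c ^ 2))) fun x _ => by
        linarith [two_mul_le_add_sq (f x) c]
    rw [intervalIntegral.integral_const_mul, intervalIntegral.integral_add hf2
      intervalIntegrable_const, intervalIntegral.integral_const, smul_eq_mul] at h
    linarith
  have h := hquad (J / (b - a))
  have hba : 0 < b - a := sub_pos.2 hlt
  field_simp at h
  nlinarith

theorem AntitoneOn.le_exp_mul_exp_mul_of_le_exp_neg_mul {f : ℝ → ℝ} {T c : ℝ}
    (hf : AntitoneOn f (Ici 0)) (hT : 0 < T) (hc : 0 ≤ c) (hf0 : 0 ≤ f 0)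
    (hstep : ∀ t, 0 ≤ t → f (t + T) ≤ exp (-c) * f t) {t : ℝ} (ht : 0 ≤ t) :
    f t ≤ exp c * exp (-(c / T) * t) * f 0 := by
  have hiter : ∀ n : ℕ, f (n * T) ≤ exp (-(c * n)) * f 0 := by
    intro n
    induction n with
    | zero => simp
    | succ n ih =>
      calc f ((n + 1 : ℕ) * T) = f (n * T + T) := by push_cast; ring_nf
        _ ≤ exp (-c) * f (n * T) := hstep _ (by positivity)
        _ ≤ exp (-c) * (exp (-(c * n)) * f 0) := by gcongr
        _ = exp (-(c * (n + 1 : ℕ))) * f 0 := by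
          rw [← mul_assoc, ← exp_add]; push_cast; ring_nf
  set n := ⌊t / T⌋₊
  have hnt : n * T ≤ t := by
    have := Nat.floor_le (div_nonneg ht hT.le)
    rwa [le_div_iff₀ hT] at this
  have hn : t / T - 1 ≤ n := by linarith [Nat.lt_floor_add_one (t / T)]
  calc f t ≤ f (n * T) := hf (by positivity : (0 : ℝ) ≤ n * T) ht hnt
    _ ≤ exp (-(c * n)) * f 0 := hiter n
    _ ≤ exp (c + -(c / T) * t) * f 0 := by
      gcongr
      have h1 : c * (t / T - 1) ≤ c * n := by gcongr
      have h2 : c / T * t = c * (t / T) := by ring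
      linarith
    _ = exp c * exp (-(c / T) * t) * f 0 := by rw [exp_add]

/-- Operator form of `∫ₜ^{t+T} ΦᵀΦ ⪰ δ I`. -/
def IsPersistentlyExciting {E F : Type*} [NormedAddCommGroup E] [NormedSpace ℝ E]
    [NormedAddCommGroup F] [NormedSpace ℝ F] (A : ℝ → E →L[ℝ] F) (T δ : ℝ) : Prop :=
  ∀ t, 0 ≤ t → ∀ v : E, δ * ‖v‖ ^ 2 ≤ ∫ τ in t..t + T, ‖A τ v‖ ^ 2

noncomputable def windowDecayExponent (γ L T δ : ℝ) : ℝ :=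
  γ * δ / (1 + γ ^ 2 * L ^ 4 * T ^ 2)

namespace GradientFlow

variable {E F : Type*} [NormedAddCommGroup E] [InnerProductSpace ℝ E] [CompleteSpace E]
  [NormedAddCommGroup F] [InnerProductSpace ℝ F] [CompleteSpace F]
  {A : ℝ → E →L[ℝ] F} {γ L T δ : ℝ} {y : ℝ → E}

theorem hasDerivAt_norm_sq {t : ℝ} (h : HasDerivAt y (-γ • ((A t)†) (A t (y t))) t) :
    HasDerivAt (fun s => ‖y s‖ ^ 2) (-(2 * γ) * ‖A t (y t)‖ ^ 2) t := by
  convert h.norm_sq using 1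
  rw [inner_smul_right, ContinuousLinearMap.adjoint_inner_right, real_inner_self_eq_norm_sq]
  ring

theorem continuousOn_apply (hA : Continuous A)
    (hy : ∀ t, 0 ≤ t → HasDerivAt y (-γ • ((A t)†) (A t (y t))) t) :
    ContinuousOn (fun τ => A τ (y τ)) (Ici 0) :=
  hA.continuousOn.clm_apply fun t ht => (hy t ht).continuousAt.continuousWithinAt

theorem norm_sq_eq_sub_integral (hA : Continuous A)
    (hy : ∀ t, 0 ≤ t → HasDerivAt y (-γ • ((A t)†) (A t (y t))) t) {a b : ℝ}
    (ha : 0 ≤ a) (hab : a ≤ b) :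
    ‖y b‖ ^ 2 = ‖y a‖ ^ 2 - 2 * γ * ∫ τ in a..b, ‖A τ (y τ)‖ ^ 2 := by
  have hsub : uIcc a b ⊆ Ici 0 := by
    rw [uIcc_of_le hab]; exact fun τ hτ => ha.trans hτ.1
  have hftc := intervalIntegral.integral_eq_sub_of_hasDerivAt
    (fun τ hτ => hasDerivAt_norm_sq (hy τ (hsub hτ)))
    ((((continuousOn_apply hA hy).norm.pow 2).mono hsub).const_smul (-(2 * γ))).intervalIntegrable
  rw [intervalIntegral.integral_const_mul] at hftc
  linarith

theorem antitoneOn_norm_sq (hA : Continuous A) (hγ : 0 ≤ γ)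
    (hy : ∀ t, 0 ≤ t → HasDerivAt y (-γ • ((A t)†) (A t (y t))) t) :
    AntitoneOn (fun t => ‖y t‖ ^ 2) (Ici 0) := fun a ha b _ hab => by
  have : 0 ≤ ∫ τ in a..b, ‖A τ (y τ)‖ ^ 2 :=
    intervalIntegral.integral_nonneg hab fun _ _ => sq_nonneg _
  simp only [norm_sq_eq_sub_integral hA hy ha hab]
  linarith [mul_nonneg hγ this]

theorem norm_sub_le_integral (hA : Continuous A) (hL : ∀ t, ‖A t‖ ≤ L) (hγ : 0 ≤ γ)
    (hy : ∀ t, 0 ≤ t → HasDerivAt y (-γ • ((A t)†) (A t (y t))) t) {a b : ℝ}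
    (ha : 0 ≤ a) (hab : a ≤ b) :
    ‖y b - y a‖ ≤ γ * L * ∫ τ in a..b, ‖A τ (y τ)‖ := by
  have hsub : uIcc a b ⊆ Ici 0 := by
    rw [uIcc_of_le hab]; exact fun τ hτ => ha.trans hτ.1
  have hderiv : ContinuousOn (fun τ => -γ • ((A τ)†) (A τ (y τ))) (uIcc a b) :=
    (((ContinuousLinearMap.adjoint.continuous.comp hA).continuousOn.clm_apply
      (continuousOn_apply hA hy)).const_smul (-γ)).mono hsub
  rw [← intervalIntegral.integral_eq_sub_of_hasDerivAt (fun τ hτ => hy τ (hsub hτ))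
    hderiv.intervalIntegrable, ← intervalIntegral.integral_const_mul]
  refine intervalIntegral.norm_integral_le_of_norm_le hab (Filter.Eventually.of_forall
    fun τ _ => ?_) ((((continuousOn_apply hA hy).norm).mono hsub).intervalIntegrable.const_mul _)
  calc ‖-γ • ((A τ)†) (A τ (y τ))‖ = γ * ‖((A τ)†) (A τ (y τ))‖ := by
        rw [norm_smul, norm_neg, Real.norm_of_nonneg hγ]
    _ ≤ γ * (L * ‖A τ (y τ)‖) := by
        gcongr
        refine ((A τ)†.le_opNorm _).trans ?_
        rw [LinearIsometryEquiv.norm_map]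
        gcongr
        exact hL τ
    _ = γ * L * ‖A τ (y τ)‖ := by ring

theorem norm_sub_sq_le_integral_sq (hA : Continuous A) (hL : ∀ t, ‖A t‖ ≤ L) (hγ : 0 ≤ γ)
    (hy : ∀ t, 0 ≤ t → HasDerivAt y (-γ • ((A t)†) (A t (y t))) t) {t τ : ℝ}
    (ht : 0 ≤ t) (hτ : τ ∈ Icc t (t + T)) :
    ‖y τ - y t‖ ^ 2 ≤ γ ^ 2 * L ^ 2 * T * ∫ s in t..t + T, ‖A s (y s)‖ ^ 2 := by
  have hL0 : 0 ≤ L := (norm_nonneg _).trans (hL 0)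
  have hsub : Icc t (t + T) ⊆ Ici 0 := fun s hs => ht.trans hs.1
  have hcont := (continuousOn_apply hA hy).norm.mono hsub
  have hJ : ∫ s in t..τ, ‖A s (y s)‖ ≤ ∫ s in t..t + T, ‖A s (y s)‖ :=
    intervalIntegral.integral_mono_interval le_rfl hτ.1 hτ.2
      (Filter.Eventually.of_forall fun _ => norm_nonneg _)
      (hcont.intervalIntegrable_of_Icc (hτ.1.trans hτ.2))
  have hCS := sq_intervalIntegral_le_mul_intervalIntegral_sq (hτ.1.trans hτ.2)
    (hcont.intervalIntegrable_of_Icc (hτ.1.trans hτ.2))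
    ((hcont.pow 2).intervalIntegrable_of_Icc (hτ.1.trans hτ.2))
  have hdrift := (norm_sub_le_integral hA hL hγ hy ht hτ.1).trans
    (mul_le_mul_of_nonneg_left hJ (by positivity))
  calc ‖y τ - y t‖ ^ 2 ≤ (γ * L * ∫ s in t..t + T, ‖A s (y s)‖) ^ 2 := by
        gcongr
    _ = γ ^ 2 * L ^ 2 * (∫ s in t..t + T, ‖A s (y s)‖) ^ 2 := by ring
    _ ≤ γ ^ 2 * L ^ 2 * T * ∫ s in t..t + T, ‖A s (y s)‖ ^ 2 := by
        rw [add_sub_cancel_left] at hCS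
        rw [mul_assoc _ T]
        gcongr

theorem mul_norm_sq_le_integral (hA : Continuous A) (hL : ∀ t, ‖A t‖ ≤ L) (hγ : 0 ≤ γ)
    (hT : 0 ≤ T) (hPE : IsPersistentlyExciting A T δ)
    (hy : ∀ t, 0 ≤ t → HasDerivAt y (-γ • ((A t)†) (A t (y t))) t) {t : ℝ} (ht : 0 ≤ t) :
    δ * ‖y t‖ ^ 2 ≤ 2 * (1 + γ ^ 2 * L ^ 4 * T ^ 2) * ∫ τ in t..t + T, ‖A τ (y τ)‖ ^ 2 := by
  set I := ∫ τ in t..t + T, ‖A τ (y τ)‖ ^ 2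
  have htT : t ≤ t + T := le_add_of_nonneg_right hT
  have hsub : Icc t (t + T) ⊆ Ici 0 := fun s hs => ht.trans hs.1
  have hpoint : ∀ τ ∈ Icc t (t + T),
      ‖A τ (y t)‖ ^ 2 ≤ 2 * ‖A τ (y τ)‖ ^ 2 + 2 * (L ^ 2 * (γ ^ 2 * L ^ 2 * T * I)) := by
    intro τ hτ
    have hsplit : A τ (y t) = A τ (y τ) - A τ (y τ - y t) := by rw [map_sub, sub_sub_cancel]
    have hAd : ‖A τ (y τ - y t)‖ ^ 2 ≤ L ^ 2 * ‖y τ - y t‖ ^ 2 := by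
      rw [← mul_pow]
      gcongr
      exact (A τ).le_of_opNorm_le (hL τ) _
    calc ‖A τ (y t)‖ ^ 2 ≤ (‖A τ (y τ)‖ + ‖A τ (y τ - y t)‖) ^ 2 := by
          rw [hsplit]; gcongr; exact norm_sub_le _ _
      _ ≤ 2 * (‖A τ (y τ)‖ ^ 2 + ‖A τ (y τ - y t)‖ ^ 2) := add_sq_le
      _ ≤ 2 * ‖A τ (y τ)‖ ^ 2 + 2 * (L ^ 2 * (γ ^ 2 * L ^ 2 * T * I)) := by
          linarith [hAd, mul_le_mul_of_nonneg_left
            (norm_sub_sq_le_integral_sq hA hL hγ hy ht hτ) (sq_nonneg L)]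
  have hint : IntervalIntegrable (fun τ => ‖A τ (y τ)‖ ^ 2) volume t (t + T) :=
    (((continuousOn_apply hA hy).norm.pow 2).mono hsub).intervalIntegrable_of_Icc htT
  calc δ * ‖y t‖ ^ 2 ≤ ∫ τ in t..t + T, ‖A τ (y t)‖ ^ 2 := hPE t ht (y t)
    _ ≤ ∫ τ in t..t + T, (2 * ‖A τ (y τ)‖ ^ 2 + 2 * (L ^ 2 * (γ ^ 2 * L ^ 2 * T * I))) :=
        intervalIntegral.integral_mono_on htT
          (((hA.clm_apply continuous_const).norm.pow 2).intervalIntegrable _ _)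
          ((hint.const_mul 2).add intervalIntegrable_const) hpoint
    _ = 2 * (1 + γ ^ 2 * L ^ 4 * T ^ 2) * I := by
        rw [intervalIntegral.integral_add (hint.const_mul 2) intervalIntegrable_const,
          intervalIntegral.integral_const_mul, intervalIntegral.integral_const, smul_eq_mul,
          add_sub_cancel_left]
        ring

theorem norm_sq_add_le_exp_neg_mul (hA : Continuous A) (hL : ∀ t, ‖A t‖ ≤ L) (hγ : 0 ≤ γ)
    (hT : 0 ≤ T) (hPE : IsPersistentlyExciting A T δ)
    (hy : ∀ t, 0 ≤ t → HasDerivAt y (-γ • ((A t)†) (A t (y t))) t) {t : ℝ} (ht : 0 ≤ t) :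
    ‖y (t + T)‖ ^ 2 ≤ exp (-windowDecayExponent γ L T δ) * ‖y t‖ ^ 2 := by
  set c := windowDecayExponent γ L T δ
  set K := 1 + γ ^ 2 * L ^ 4 * T ^ 2
  have hK : 0 < K := by positivity
  have hexc : δ * ‖y t‖ ^ 2 ≤ 2 * K * ∫ τ in t..t + T, ‖A τ (y τ)‖ ^ 2 :=
    mul_norm_sq_le_integral hA hL hγ hT hPE hy ht
  have hdecay : c * ‖y t‖ ^ 2 ≤ 2 * γ * ∫ τ in t..t + T, ‖A τ (y τ)‖ ^ 2 := by
    have := mul_le_mul_of_nonneg_left hexc (div_nonneg hγ hK.le)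
    calc c * ‖y t‖ ^ 2 = γ / K * (δ * ‖y t‖ ^ 2) := by simp only [c, windowDecayExponent]; ring
      _ ≤ _ := this
      _ = 2 * γ * ∫ τ in t..t + T, ‖A τ (y τ)‖ ^ 2 := by field_simp
  calc ‖y (t + T)‖ ^ 2 ≤ (-c + 1) * ‖y t‖ ^ 2 := by
        rw [norm_sq_eq_sub_integral hA hy ht (le_add_of_nonneg_right hT)]
        linarith
    _ ≤ exp (-c) * ‖y t‖ ^ 2 := by gcongr; exact add_one_le_exp _

theorem norm_le_exp_mul_exp_mul (hA : Continuous A) (hL : ∀ t, ‖A t‖ ≤ L) (hγ : 0 ≤ γ)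
    (hT : 0 < T) (hδ : 0 ≤ δ) (hPE : IsPersistentlyExciting A T δ)
    (hy : ∀ t, 0 ≤ t → HasDerivAt y (-γ • ((A t)†) (A t (y t))) t) {t : ℝ} (ht : 0 ≤ t) :
    ‖y t‖ ≤ exp (windowDecayExponent γ L T δ / 2) *
      exp (-(windowDecayExponent γ L T δ / (2 * T)) * t) * ‖y 0‖ := by
  set c := windowDecayExponent γ L T δ
  have hc : 0 ≤ c := by unfold c windowDecayExponent; positivity
  have hsq := (antitoneOn_norm_sq hA hγ hy).le_exp_mul_exp_mul_of_le_exp_neg_mul hT hc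
    (sq_nonneg _) (fun s hs => norm_sq_add_le_exp_neg_mul hA hL hγ hT.le hPE hy hs) ht
  refine (pow_le_pow_iff_left₀ (norm_nonneg _) (by positivity) two_ne_zero).1 ?_
  calc ‖y t‖ ^ 2 ≤ exp c * exp (-(c / T) * t) * ‖y 0‖ ^ 2 := hsq
    _ = (exp (c / 2) * exp (-(c / (2 * T)) * t) * ‖y 0‖) ^ 2 := by
        rw [mul_pow, mul_pow, ← exp_nat_mul, ← exp_nat_mul]
        congr 3 <;> field_simp <;> norm_num

end GradientFlow

namespace PiLp

variable {ι : Type*} [Fintype ι] {β : ι → Type*} [∀ i, SeminormedAddCommGroup (β i)]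

theorem norm_le_norm_toLp (p : ENNReal) [Fact (1 ≤ p)] (v : ∀ i, β i) :
    ‖v‖ ≤ ‖WithLp.toLp p v‖ :=
  pi_norm_le_iff_of_nonneg (norm_nonneg _) |>.2 fun i => norm_apply_le (WithLp.toLp p v) i

theorem norm_toLp_two_le_sqrt_card_mul (v : ∀ i, β i) :
    ‖WithLp.toLp 2 v‖ ≤ √(Fintype.card ι) * ‖v‖ := by
  rw [norm_eq_of_L2, ← sqrt_sq (norm_nonneg v), ← sqrt_mul (Nat.cast_nonneg _)]
  gcongr
  calc ∑ i, ‖v i‖ ^ 2 ≤ ∑ _i : ι, ‖v‖ ^ 2 := by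
        gcongr with i; exact norm_le_pi_norm v i
    _ = Fintype.card ι * ‖v‖ ^ 2 := by simp

end PiLp

namespace Matrix

variable {m n : Type*} [Fintype m] [Fintype n] [DecidableEq n]

/-- Rectangular counterpart of `Matrix.toEuclideanCLM`, bundled as a continuous map of the
matrix. -/
noncomputable def toEuclideanOp :
    Matrix m n ℝ →L[ℝ] EuclideanSpace ℝ n →L[ℝ] EuclideanSpace ℝ m :=
  LinearMap.toContinuousLinearMap (toEuclideanLin.trans LinearMap.toContinuousLinearMap).toLinearMap

@[simp]
theorem ofLp_toEuclideanOp (A : Matrix m n ℝ) (v : EuclideanSpace ℝ n) :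
    (toEuclideanOp A v).ofLp = A *ᵥ v.ofLp := rfl

theorem adjoint_toEuclideanOp [DecidableEq m] (A : Matrix m n ℝ) :
    (toEuclideanOp A)† = toEuclideanOp Aᵀ := by
  refine ((ContinuousLinearMap.eq_adjoint_iff _ _).2 fun v w => ?_).symm
  simp only [EuclideanSpace.inner_eq_star_dotProduct, ofLp_toEuclideanOp, star_trivial]
  rw [dotProduct_mulVec, vecMul_transpose, dotProduct_comm]

theorem toEuclideanOp_transpose_mul_self [DecidableEq m] (A : Matrix m n ℝ) :
    toEuclideanOp (Aᵀ * A) = (toEuclideanOp A)† ∘L toEuclideanOp A := by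
  ext v : 1
  apply WithLp.ofLp_injective
  simp [adjoint_toEuclideanOp, mulVec_mulVec]

theorem isPersistentlyExciting_toEuclideanOp [DecidableEq m] {Φ : ℝ → Matrix m n ℝ}
    (hΦ : Continuous Φ) {T δ : ℝ} (hPE : ∀ t, 0 ≤ t →
      ((∫ τ in t..t + T, (Φ τ)ᵀ * Φ τ) - δ • (1 : Matrix n n ℝ)).PosSemidef) :
    IsPersistentlyExciting (fun τ => toEuclideanOp (Φ τ)) T δ := by
  intro t ht v
  set Q : Matrix n n ℝ →L[ℝ] ℝ :=
    ((innerSL ℝ v).comp (ContinuousLinearMap.apply ℝ _ v)).comp toEuclideanOp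
  have hQ : ∀ τ, ‖toEuclideanOp (Φ τ) v‖ ^ 2 = Q ((Φ τ)ᵀ * Φ τ) := fun τ => by
    simp [Q, toEuclideanOp_transpose_mul_self, ContinuousLinearMap.adjoint_inner_right]
  simp only [hQ]
  set S := ∫ τ in t..t + T, (Φ τ)ᵀ * Φ τ
  have hcomm : ∫ τ in t..t + T, Q ((Φ τ)ᵀ * Φ τ) = Q S :=
    Q.intervalIntegral_comp_comm ((hΦ.matrix_transpose.matrix_mul hΦ).intervalIntegrable _ _)
  have hpos := (isPositive_toEuclideanLin_iff.2 (hPE t ht)).inner_nonneg_left v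
  have hsplit : toEuclideanLin (S - δ • 1) v = toEuclideanOp S v - δ • v := by
    apply WithLp.ofLp_injective
    simp
  rw [hsplit, inner_sub_left, real_inner_smul_left, real_inner_self_eq_norm_sq,
    real_inner_comm] at hpos
  rw [hcomm]
  simp only [Q, ContinuousLinearMap.comp_apply, innerSL_apply_apply,
    ContinuousLinearMap.apply_apply]
  linarith

theorem hasDerivAt_toLp_of_hasDerivAt [DecidableEq m] {Φ : Matrix m n ℝ} {x : ℝ → n → ℝ} {γ t : ℝ}
    (h : HasDerivAt x (-γ • (Φᵀ * Φ) *ᵥ x t) t) :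
    HasDerivAt (fun s => WithLp.toLp 2 (x s))
      (-γ • ((toEuclideanOp Φ)†) (toEuclideanOp Φ (WithLp.toLp 2 (x t)))) t := by
  refine ((EuclideanSpace.equiv n ℝ).symm.hasFDerivAt.comp_hasDerivAt t h).congr_deriv ?_
  rw [← ContinuousLinearMap.comp_apply, ← toEuclideanOp_transpose_mul_self]
  rfl

end Matrix

/-- Uniform exponential stability of the gradient flow `x' = −γ Φ(t)ᵀΦ(t) x`
under persistency of excitation of the bounded regressor `Φ`. -/
theorem stmt_13 {m q : ℕ} (Φ : ℝ → Matrix (Fin m) (Fin q) ℝ) (hΦc : Continuous Φ)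
    (M : ℝ) (hM : ∀ t : ℝ, ‖Φ t‖ ≤ M)
    (T δ : ℝ) (hT : 0 < T) (hδ : 0 < δ)
    (hPE : ∀ t : ℝ, 0 ≤ t →
      ((∫ τ in t..(t + T), (Φ τ)ᵀ * Φ τ) - δ • (1 : Matrix (Fin q) (Fin q) ℝ)).PosSemidef)
    (γ : ℝ) (hγ : 0 < γ) (x : ℝ → (Fin q → ℝ))
    (hx : ∀ t : ℝ, 0 ≤ t →
      HasDerivAt x (-γ • ((Φ t)ᵀ * Φ t).mulVec (x t)) t) :
    ∃ k lam : ℝ, 1 ≤ k ∧ 0 < lam ∧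
      ∀ t : ℝ, 0 ≤ t → ‖x t‖ ≤ k * Real.exp (-lam * t) * ‖x 0‖ := by
  -- the sup norm on matrices is only a local instance, so `‖toEuclideanOp‖` cannot be formed
  obtain ⟨C, hC0, hC⟩ :=
    (toEuclideanOp : Matrix (Fin m) (Fin q) ℝ →L[ℝ] _).isBoundedLinearMap.bound
  have hL : ∀ t, ‖toEuclideanOp (Φ t)‖ ≤ C * M := fun t =>
    (hC _).trans (mul_le_mul_of_nonneg_left (hM t) hC0.le)
  set c := windowDecayExponent γ (C * M) T δ
  have hc : 0 < c := by unfold c windowDecayExponent; positivity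
  refine ⟨max 1 √q * exp (c / 2), c / (2 * T),
    one_le_mul_of_one_le_of_one_le (le_max_left _ _) (one_le_exp (by positivity)),
    by positivity, fun t ht => ?_⟩
  have hdecay := GradientFlow.norm_le_exp_mul_exp_mul (toEuclideanOp.continuous.comp hΦc) hL
    hγ.le hT hδ.le (isPersistentlyExciting_toEuclideanOp hΦc hPE)
    (fun s hs => hasDerivAt_toLp_of_hasDerivAt (hx s hs)) ht
  have hx0 : ‖WithLp.toLp 2 (x 0)‖ ≤ max 1 √q * ‖x 0‖ :=
    (PiLp.norm_toLp_two_le_sqrt_card_mul _).trans <| by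
      rw [Fintype.card_fin]; gcongr; exact le_max_right _ _
  calc ‖x t‖ ≤ ‖WithLp.toLp 2 (x t)‖ := PiLp.norm_le_norm_toLp 2 _
    _ ≤ exp (c / 2) * exp (-(c / (2 * T)) * t) * ‖WithLp.toLp 2 (x 0)‖ := hdecay
    _ ≤ exp (c / 2) * exp (-(c / (2 * T)) * t) * (max 1 √q * ‖x 0‖) := by gcongr
    _ = max 1 √q * exp (c / 2) * exp (-(c / (2 * T)) * t) * ‖x 0‖ := by ring
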